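/- Let Z be a categorical group acting on the right on a category P via a functor ρ, with ρ free on objects and morphisms and transitive on fibers of the quotient functor π : P → B. Given a representation ρ_V of Z on a categorical vector space V, the twisted product P ×_ρ V — whose objects are equivalence classes [p, v] under (p, v) ~ (p·k, ρ_V(k⁻¹)v) for k ∈ Obj(Z), and whose morphisms are classes [F, f] under (F, f) ~ (F·φ, ρ_V(φ⁻¹)f) for φ ∈ Mor(Z) — is a well-defined category, with s[F, f] = [s(F), s(f)], t[F, f] = [t(F), t(f)], and composition [H, h] ∘ [F, f] = [H ∘ F, h ∘ f] well-defined on equivalence classes. -/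

import Mathlib

/-! The twisted product is the orbit category of the diagonal right action
`(p, v) · k = (p · k, ρ(k⁻¹) v)` of `Z` on `P × V`; that `v ↦ ρ(k⁻¹) v` is again functorial
uses the exchange law, which makes inversion in `Z` a functor. For an action that is free on
objects, orbit classes of morphisms compose well: if `F, H` and `F · φ, H · ψ` are both
composable pairs, freeness forces `t φ = s ψ`, and functoriality of the action gives
`(H · ψ) ∘ (F · φ) = (H ∘ F) · (ψ ∘ φ)`. -/

/-- A (small, set-based) category: sets of objects and morphisms with
source, target, identity and composition maps. `comp g f` means `g ∘ f`. -/
structure PreCat (O M : Type*) where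
  s : M → O
  t : M → O
  e : O → M
  s_e : ∀ x, s (e x) = x
  t_e : ∀ x, t (e x) = x
  comp : M → M → M
  s_comp : ∀ g f, t f = s g → s (comp g f) = s f
  t_comp : ∀ g f, t f = s g → t (comp g f) = t g
  comp_e : ∀ f, comp f (e (s f)) = f
  e_comp : ∀ f, comp (e (t f)) f = f
  comp_assoc : ∀ f g h, t f = s g → t g = s h →
    comp h (comp g f) = comp (comp h g) f

/-- A categorical group: a category whose objects and morphisms form groups,
with source, target and identity-assigning maps being group homomorphisms,
satisfying the exchange law coming from functoriality of the product. -/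
structure CatGroup (O M : Type*) [Group O] [Group M] where
  s : M →* O
  t : M →* O
  e : O →* M
  s_e : ∀ x, s (e x) = x
  t_e : ∀ x, t (e x) = x
  comp : M → M → M
  s_comp : ∀ g f, t f = s g → s (comp g f) = s f
  t_comp : ∀ g f, t f = s g → t (comp g f) = t g
  comp_e : ∀ f, comp f (e (s f)) = f
  e_comp : ∀ f, comp (e (t f)) f = f
  comp_assoc : ∀ f g h, t f = s g → t g = s h →
    comp h (comp g f) = comp (comp h g) f
  exchange : ∀ f f' g g', t f' = s f → t g' = s g →
    comp (f * g) (f' * g') = comp f f' * comp g g'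

structure CatAction {PO PM ZO ZM : Type*} [Group ZO] [Group ZM]
    (P : PreCat PO PM) (Z : CatGroup ZO ZM) where
  objAct : PO → ZO → PO
  morAct : PM → ZM → PM
  objAct_one : ∀ p, objAct p 1 = p
  objAct_mul : ∀ p z z', objAct p (z * z') = objAct (objAct p z) z'
  morAct_one : ∀ F, morAct F 1 = F
  morAct_mul : ∀ F φ φ', morAct F (φ * φ') = morAct (morAct F φ) φ'
  s_act : ∀ F φ, P.s (morAct F φ) = objAct (P.s F) (Z.s φ)
  t_act : ∀ F φ, P.t (morAct F φ) = objAct (P.t F) (Z.t φ)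
  e_act : ∀ p z, morAct (P.e p) (Z.e z) = P.e (objAct p z)
  comp_act : ∀ F H φ ψ, P.t F = P.s H → Z.t φ = Z.s ψ →
    morAct (P.comp H F) (Z.comp ψ φ) = P.comp (morAct H ψ) (morAct F φ)

/-- Equivalence `(p, v) ~ (p·k, ρ(k⁻¹)v)` on pairs of objects. -/
def twObjRel {PO PM ZO ZM VO : Type*} [Group ZO] [Group ZM]
    {P : PreCat PO PM} {Z : CatGroup ZO ZM} (A : CatAction P Z)
    (rObj : ZO → VO → VO) : PO × VO → PO × VO → Prop :=
  fun p q => ∃ k : ZO, q = (A.objAct p.1 k, rObj k⁻¹ p.2)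

/-- Equivalence `(F, f) ~ (F·φ, ρ(φ⁻¹)f)` on pairs of morphisms. -/
def twMorRel {PO PM ZO ZM VM : Type*} [Group ZO] [Group ZM]
    {P : PreCat PO PM} {Z : CatGroup ZO ZM} (A : CatAction P Z)
    (rMor : ZM → VM → VM) : PM × VM → PM × VM → Prop :=
  fun p q => ∃ φ : ZM, q = (A.morAct p.1 φ, rMor φ⁻¹ p.2)

namespace CatGroup

variable {ZO ZM : Type*} [Group ZO] [Group ZM] (Z : CatGroup ZO ZM)

theorem comp_one_one : Z.comp 1 1 = 1 := by
  simpa only [map_one] using Z.comp_e 1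

theorem comp_inv {φ ψ : ZM} (h : Z.t φ = Z.s ψ) :
    Z.comp ψ⁻¹ φ⁻¹ = (Z.comp ψ φ)⁻¹ := by
  have h' : Z.t φ⁻¹ = Z.s ψ⁻¹ := by rw [map_inv, map_inv, h]
  have hx := Z.exchange ψ φ ψ⁻¹ φ⁻¹ h h'
  rw [mul_inv_cancel, mul_inv_cancel, comp_one_one] at hx
  exact (inv_eq_of_mul_eq_one_right hx.symm).symm

end CatGroup

namespace PreCat

variable {PO PM VO VM : Type*}

def prod (P : PreCat PO PM) (V : PreCat VO VM) : PreCat (PO × VO) (PM × VM) where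
  s F := (P.s F.1, V.s F.2)
  t F := (P.t F.1, V.t F.2)
  e p := (P.e p.1, V.e p.2)
  s_e p := Prod.ext (P.s_e p.1) (V.s_e p.2)
  t_e p := Prod.ext (P.t_e p.1) (V.t_e p.2)
  comp G F := (P.comp G.1 F.1, V.comp G.2 F.2)
  s_comp G F h :=
    Prod.ext (P.s_comp G.1 F.1 (Prod.ext_iff.1 h).1) (V.s_comp G.2 F.2 (Prod.ext_iff.1 h).2)
  t_comp G F h :=
    Prod.ext (P.t_comp G.1 F.1 (Prod.ext_iff.1 h).1) (V.t_comp G.2 F.2 (Prod.ext_iff.1 h).2)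
  comp_e F := Prod.ext (P.comp_e F.1) (V.comp_e F.2)
  e_comp F := Prod.ext (P.e_comp F.1) (V.e_comp F.2)
  comp_assoc F G H h h' := Prod.ext
    (P.comp_assoc F.1 G.1 H.1 (Prod.ext_iff.1 h).1 (Prod.ext_iff.1 h').1)
    (V.comp_assoc F.2 G.2 H.2 (Prod.ext_iff.1 h).2 (Prod.ext_iff.1 h').2)

end PreCat

structure CatRep {ZO ZM VO VM : Type*} [Group ZO] [Group ZM]
    (Z : CatGroup ZO ZM) (V : PreCat VO VM) where
  objAct : ZO → VO → VO
  morAct : ZM → VM → VM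
  objAct_one : ∀ v, objAct 1 v = v
  objAct_mul : ∀ z z' v, objAct (z * z') v = objAct z (objAct z' v)
  morAct_one : ∀ f, morAct 1 f = f
  morAct_mul : ∀ φ φ' f, morAct (φ * φ') f = morAct φ (morAct φ' f)
  s_act : ∀ φ f, V.s (morAct φ f) = objAct (Z.s φ) (V.s f)
  t_act : ∀ φ f, V.t (morAct φ f) = objAct (Z.t φ) (V.t f)
  e_act : ∀ z v, morAct (Z.e z) (V.e v) = V.e (objAct z v)
  comp_act : ∀ φ ψ f g, V.t f = V.s g → Z.t φ = Z.s ψ →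
    morAct (Z.comp ψ φ) (V.comp g f) = V.comp (morAct ψ g) (morAct φ f)

namespace CatRep

variable {ZO ZM VO VM : Type*} [Group ZO] [Group ZM] {Z : CatGroup ZO ZM} {V : PreCat VO VM}

def toCatAction (ρ : CatRep Z V) : CatAction V Z where
  objAct v k := ρ.objAct k⁻¹ v
  morAct f φ := ρ.morAct φ⁻¹ f
  objAct_one v := by rw [inv_one, ρ.objAct_one]
  objAct_mul v z z' := by rw [mul_inv_rev, ρ.objAct_mul]
  morAct_one f := by rw [inv_one, ρ.morAct_one]
  morAct_mul f φ φ' := by rw [mul_inv_rev, ρ.morAct_mul]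
  s_act f φ := by rw [ρ.s_act, map_inv]
  t_act f φ := by rw [ρ.t_act, map_inv]
  e_act v z := by rw [← map_inv, ρ.e_act]
  comp_act f g φ ψ hfg hφψ := by
    rw [← Z.comp_inv hφψ]
    exact ρ.comp_act _ _ f g hfg (by rw [map_inv, map_inv, hφψ])

end CatRep

namespace CatAction

variable {ZO ZM : Type*} [Group ZO] [Group ZM] {Z : CatGroup ZO ZM}

def prod {PO PM VO VM : Type*} {P : PreCat PO PM} {V : PreCat VO VM}
    (A : CatAction P Z) (A' : CatAction V Z) : CatAction (P.prod V) Z where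
  objAct p k := (A.objAct p.1 k, A'.objAct p.2 k)
  morAct F φ := (A.morAct F.1 φ, A'.morAct F.2 φ)
  objAct_one p := Prod.ext (A.objAct_one p.1) (A'.objAct_one p.2)
  objAct_mul p z z' := Prod.ext (A.objAct_mul p.1 z z') (A'.objAct_mul p.2 z z')
  morAct_one F := Prod.ext (A.morAct_one F.1) (A'.morAct_one F.2)
  morAct_mul F φ φ' := Prod.ext (A.morAct_mul F.1 φ φ') (A'.morAct_mul F.2 φ φ')
  s_act F φ := Prod.ext (A.s_act F.1 φ) (A'.s_act F.2 φ)
  t_act F φ := Prod.ext (A.t_act F.1 φ) (A'.t_act F.2 φ)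
  e_act p z := Prod.ext (A.e_act p.1 z) (A'.e_act p.2 z)
  comp_act F H φ ψ h hφψ := Prod.ext
    (A.comp_act F.1 H.1 φ ψ (Prod.ext_iff.1 h).1 hφψ)
    (A'.comp_act F.2 H.2 φ ψ (Prod.ext_iff.1 h).2 hφψ)

variable {QO QM : Type*} {Q : PreCat QO QM} (B : CatAction Q Z)

def ObjOrbitRel (p q : QO) : Prop := ∃ k, q = B.objAct p k

def MorOrbitRel (F G : QM) : Prop := ∃ φ, G = B.morAct F φ

theorem objOrbitRel_equivalence : Equivalence B.ObjOrbitRel where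
  refl p := ⟨1, (B.objAct_one p).symm⟩
  symm := by
    rintro p _ ⟨k, rfl⟩
    exact ⟨k⁻¹, by rw [← B.objAct_mul, mul_inv_cancel, B.objAct_one]⟩
  trans := by
    rintro p _ _ ⟨k, rfl⟩ ⟨k', rfl⟩
    exact ⟨k * k', (B.objAct_mul p k k').symm⟩

theorem morOrbitRel_equivalence : Equivalence B.MorOrbitRel where
  refl F := ⟨1, (B.morAct_one F).symm⟩
  symm := by
    rintro F _ ⟨φ, rfl⟩
    exact ⟨φ⁻¹, by rw [← B.morAct_mul, mul_inv_cancel, B.morAct_one]⟩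
  trans := by
    rintro F _ _ ⟨φ, rfl⟩ ⟨φ', rfl⟩
    exact ⟨φ * φ', (B.morAct_mul F φ φ').symm⟩

def quotS : Quot B.MorOrbitRel → Quot B.ObjOrbitRel :=
  Quot.lift (fun F => Quot.mk _ (Q.s F)) <| by
    rintro F _ ⟨φ, rfl⟩
    exact Quot.sound ⟨Z.s φ, B.s_act F φ⟩

def quotT : Quot B.MorOrbitRel → Quot B.ObjOrbitRel :=
  Quot.lift (fun F => Quot.mk _ (Q.t F)) <| by
    rintro F _ ⟨φ, rfl⟩
    exact Quot.sound ⟨Z.t φ, B.t_act F φ⟩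

def quotE : Quot B.ObjOrbitRel → Quot B.MorOrbitRel :=
  Quot.lift (fun p => Quot.mk _ (Q.e p)) <| by
    rintro p _ ⟨k, rfl⟩
    exact Quot.sound ⟨Z.e k, (B.e_act p k).symm⟩

/-- Junk (the left argument) when the classes have no composable representatives. -/
noncomputable def quotComp (G F : Quot B.MorOrbitRel) : Quot B.MorOrbitRel :=
  open Classical in
  if h : ∃ x : QM × QM, Quot.mk _ x.1 = G ∧ Quot.mk _ x.2 = F ∧ Q.t x.2 = Q.s x.1 then
    Quot.mk _ (Q.comp h.choose.1 h.choose.2)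
  else G

variable {B}

theorem morOrbitRel_comp (hfree : ∀ p z z', B.objAct p z = B.objAct p z' → z = z')
    {F H : QM} (φ ψ : ZM) (h : Q.t F = Q.s H)
    (h' : Q.t (B.morAct F φ) = Q.s (B.morAct H ψ)) :
    B.MorOrbitRel (Q.comp H F) (Q.comp (B.morAct H ψ) (B.morAct F φ)) := by
  have hφψ : Z.t φ = Z.s ψ := hfree (Q.t F) _ _ (by rw [← B.t_act, h', B.s_act, h])
  exact ⟨Z.comp ψ φ, (B.comp_act F H φ ψ h hφψ).symm⟩

theorem quotComp_mk (hfree : ∀ p z z', B.objAct p z = B.objAct p z' → z = z')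
    {F H : QM} (h : Q.t F = Q.s H) :
    B.quotComp (Quot.mk _ H) (Quot.mk _ F) = Quot.mk _ (Q.comp H F) := by
  have hex : ∃ x : QM × QM, Quot.mk B.MorOrbitRel x.1 = Quot.mk _ H ∧
      Quot.mk B.MorOrbitRel x.2 = Quot.mk _ F ∧ Q.t x.2 = Q.s x.1 := ⟨(H, F), rfl, rfl, h⟩
  rw [quotComp, dif_pos hex]
  obtain ⟨hH, hF, h'⟩ := hex.choose_spec
  rw [B.morOrbitRel_equivalence.quot_mk_eq_iff] at hH hF ⊢
  obtain ⟨ψ, hψ⟩ := B.morOrbitRel_equivalence.symm hH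
  obtain ⟨φ, hφ⟩ := B.morOrbitRel_equivalence.symm hF
  rw [hψ, hφ] at h' ⊢
  exact B.morOrbitRel_equivalence.symm (morOrbitRel_comp hfree φ ψ h h')

theorem exists_mk_eq_of_t_eq {F : QM} {G : Quot B.MorOrbitRel}
    (h : Quot.mk _ (Q.t F) = B.quotS G) : ∃ H, G = Quot.mk _ H ∧ Q.t F = Q.s H := by
  induction G using Quot.ind with
  | mk H₀ =>
    obtain ⟨k, hk⟩ := (B.objOrbitRel_equivalence.quot_mk_eq_iff _ _).1 h
    refine ⟨B.morAct H₀ (Z.e k)⁻¹, Quot.sound ⟨(Z.e k)⁻¹, rfl⟩, ?_⟩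
    rw [B.s_act, map_inv, Z.s_e, hk, ← B.objAct_mul, mul_inv_cancel, B.objAct_one]

noncomputable def quotientCat (hfree : ∀ p z z', B.objAct p z = B.objAct p z' → z = z') :
    PreCat (Quot B.ObjOrbitRel) (Quot B.MorOrbitRel) where
  s := B.quotS
  t := B.quotT
  e := B.quotE
  s_e := Quot.ind fun p => congrArg (Quot.mk _) (Q.s_e p)
  t_e := Quot.ind fun p => congrArg (Quot.mk _) (Q.t_e p)
  comp := B.quotComp
  s_comp G F := by
    induction F using Quot.ind with
    | mk F =>
      intro h
      obtain ⟨H, rfl, hFH⟩ := exists_mk_eq_of_t_eq h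
      rw [quotComp_mk hfree hFH]
      exact congrArg (Quot.mk _) (Q.s_comp H F hFH)
  t_comp G F := by
    induction F using Quot.ind with
    | mk F =>
      intro h
      obtain ⟨H, rfl, hFH⟩ := exists_mk_eq_of_t_eq h
      rw [quotComp_mk hfree hFH]
      exact congrArg (Quot.mk _) (Q.t_comp H F hFH)
  comp_e := Quot.ind fun F => by
    rw [quotS, quotE, quotComp_mk hfree (Q.t_e _), Q.comp_e]
  e_comp := Quot.ind fun F => by
    rw [quotT, quotE, quotComp_mk hfree (Q.s_e _).symm, Q.e_comp]
  comp_assoc F G H := by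
    induction F using Quot.ind with
    | mk F =>
      intro hFG' hGH'
      obtain ⟨G, rfl, hFG⟩ := exists_mk_eq_of_t_eq hFG'
      obtain ⟨H, rfl, hGH⟩ := exists_mk_eq_of_t_eq hGH'
      rw [quotComp_mk hfree hFG, quotComp_mk hfree hGH,
        quotComp_mk hfree ((Q.t_comp G F hFG).trans hGH),
        quotComp_mk hfree (hFG.trans (Q.s_comp H G hGH).symm), Q.comp_assoc F G H hFG hGH]

end CatAction

theorem stmt19_general {PO PM ZO ZM VO VM 𝔽 : Type*} [Group ZO] [Group ZM]
    [Field 𝔽] [AddCommGroup VO] [Module 𝔽 VO] [AddCommGroup VM] [Module 𝔽 VM]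
    (P : PreCat PO PM) (Z : CatGroup ZO ZM) (A : CatAction P Z)
    (V : PreCat VO VM)
    (rObj : ZO → VO →ₗ[𝔽] VO) (rMor : ZM → VM →ₗ[𝔽] VM)
    (rObj_one : ∀ v, rObj 1 v = v)
    (rObj_mul : ∀ z z' v, rObj (z * z') v = rObj z (rObj z' v))
    (rMor_one : ∀ f, rMor 1 f = f)
    (rMor_mul : ∀ φ φ' f, rMor (φ * φ') f = rMor φ (rMor φ' f))
    (r_s : ∀ φ f, V.s (rMor φ f) = rObj (Z.s φ) (V.s f))
    (r_t : ∀ φ f, V.t (rMor φ f) = rObj (Z.t φ) (V.t f))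
    (r_e : ∀ z v, rMor (Z.e z) (V.e v) = V.e (rObj z v))
    (r_comp : ∀ φ ψ f g, V.t f = V.s g → Z.t φ = Z.s ψ →
      rMor (Z.comp ψ φ) (V.comp g f) = V.comp (rMor ψ g) (rMor φ f))
    (hObjFree : ∀ p z z', A.objAct p z = A.objAct p z' → z = z') :
    ∃ C : PreCat (Quot (twObjRel A (fun z v => rObj z v)))
        (Quot (twMorRel A (fun φ f => rMor φ f))),
      (∀ (F : PM) (f : VM),
        C.s (Quot.mk (twMorRel A (fun φ f => rMor φ f)) (F, f))
          = Quot.mk (twObjRel A (fun z v => rObj z v)) (P.s F, V.s f)) ∧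
      (∀ (F : PM) (f : VM),
        C.t (Quot.mk (twMorRel A (fun φ f => rMor φ f)) (F, f))
          = Quot.mk (twObjRel A (fun z v => rObj z v)) (P.t F, V.t f)) ∧
      (∀ (p : PO) (v : VO),
        C.e (Quot.mk (twObjRel A (fun z v => rObj z v)) (p, v))
          = Quot.mk (twMorRel A (fun φ f => rMor φ f)) (P.e p, V.e v)) ∧
      (∀ (F H : PM) (f h : VM), P.t F = P.s H → V.t f = V.s h →
        C.comp (Quot.mk (twMorRel A (fun φ f => rMor φ f)) (H, h))
            (Quot.mk (twMorRel A (fun φ f => rMor φ f)) (F, f))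
          = Quot.mk (twMorRel A (fun φ f => rMor φ f)) (P.comp H F, V.comp h f)) := by
  let ρ : CatRep Z V :=
    ⟨fun z v => rObj z v, fun φ f => rMor φ f, rObj_one, rObj_mul, rMor_one, rMor_mul,
      r_s, r_t, r_e, r_comp⟩
  let D := A.prod ρ.toCatAction
  have hfree : ∀ p z z', D.objAct p z = D.objAct p z' → z = z' :=
    fun p z z' h => hObjFree p.1 z z' (Prod.ext_iff.1 h).1
  -- `twObjRel` and `twMorRel` unfold to the orbit relations of `D`.
  exact ⟨D.quotientCat hfree, fun _ _ => rfl, fun _ _ => rfl, fun _ _ => rfl,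
    fun F H f h hP hV => CatAction.quotComp_mk (B := D) hfree (Prod.ext hP hV)⟩

/-- The twisted product `P ×_ρ V` of a principal categorical bundle with a
representation of its structure categorical group `Z` on a categorical vector
space `V` is a well-defined category: objects are classes `[p, v]`, morphisms are
classes `[F, f]`, with `s[F, f] = [s(F), s(f)]`, `t[F, f] = [t(F), t(f)]`,
identities `[1_p, 1_v]`, and composition `[H, h] ∘ [F, f] = [H ∘ F, h ∘ f]`
well defined on equivalence classes. -/
theorem stmt19 {PO PM ZO ZM VO VM 𝔽 : Type*} [Group ZO] [Group ZM]
    [Field 𝔽] [AddCommGroup VO] [Module 𝔽 VO] [AddCommGroup VM] [Module 𝔽 VM]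
    (P : PreCat PO PM) (Z : CatGroup ZO ZM) (A : CatAction P Z)
    (V : PreCat VO VM)
    (rObj : ZO → VO →ₗ[𝔽] VO) (rMor : ZM → VM →ₗ[𝔽] VM)
    (rObj_one : ∀ v, rObj 1 v = v)
    (rObj_mul : ∀ z z' v, rObj (z * z') v = rObj z (rObj z' v))
    (rMor_one : ∀ f, rMor 1 f = f)
    (rMor_mul : ∀ φ φ' f, rMor (φ * φ') f = rMor φ (rMor φ' f))
    (r_s : ∀ φ f, V.s (rMor φ f) = rObj (Z.s φ) (V.s f))
    (r_t : ∀ φ f, V.t (rMor φ f) = rObj (Z.t φ) (V.t f))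
    (r_e : ∀ z v, rMor (Z.e z) (V.e v) = V.e (rObj z v))
    (r_comp : ∀ φ ψ f g, V.t f = V.s g → Z.t φ = Z.s ψ →
      rMor (Z.comp ψ φ) (V.comp g f) = V.comp (rMor ψ g) (rMor φ f))
    (hObjFree : ∀ p z z', A.objAct p z = A.objAct p z' → z = z')
    (hMorFree : ∀ F φ φ', A.morAct F φ = A.morAct F φ' → φ = φ') :
    ∃ C : PreCat (Quot (twObjRel A (fun z v => rObj z v)))
        (Quot (twMorRel A (fun φ f => rMor φ f))),
      (∀ (F : PM) (f : VM),
        C.s (Quot.mk (twMorRel A (fun φ f => rMor φ f)) (F, f))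
          = Quot.mk (twObjRel A (fun z v => rObj z v)) (P.s F, V.s f)) ∧
      (∀ (F : PM) (f : VM),
        C.t (Quot.mk (twMorRel A (fun φ f => rMor φ f)) (F, f))
          = Quot.mk (twObjRel A (fun z v => rObj z v)) (P.t F, V.t f)) ∧
      (∀ (p : PO) (v : VO),
        C.e (Quot.mk (twObjRel A (fun z v => rObj z v)) (p, v))
          = Quot.mk (twMorRel A (fun φ f => rMor φ f)) (P.e p, V.e v)) ∧
      (∀ (F H : PM) (f h : VM), P.t F = P.s H → V.t f = V.s h →
        C.comp (Quot.mk (twMorRel A (fun φ f => rMor φ f)) (H, h))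
            (Quot.mk (twMorRel A (fun φ f => rMor φ f)) (F, f))
          = Quot.mk (twMorRel A (fun φ f => rMor φ f)) (P.comp H F, V.comp h f)) :=
  stmt19_general P Z A V rObj rMor rObj_one rObj_mul rMor_one rMor_mul r_s r_t r_e r_comp hObjFree
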